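/- For Gaussian best-arm identification with a unique best arm, the function ψ_{μ,ε}(r) = ∑_{d ≠ d*} 1/(r(μ_{d*} − μ_d + ε)² − 1)² − 1 is strictly decreasing and convex on the interval (1/min_{d≠d*}(μ_{d*} − μ_d + ε)², +∞), tends to +∞ at the left endpoint and to −1 at +∞, and hence has a unique root r(μ) in this interval. -/
import Mathlib


open Finset Filter

private lemma convexOn_sum_aux {L : ℝ} {ι : Type*} (t : Finset ι) (g : ι → ℝ → ℝ)
    (h : ∀ d ∈ t, ConvexOn ℝ (Set.Ioi L) (g d)) :
    ConvexOn ℝ (Set.Ioi L) (fun r => ∑ d ∈ t, g d r) := by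
  classical
  induction t using Finset.cons_induction with
  | empty => simpa using convexOn_const 0 (convex_Ioi L)
  | cons a s ha ih =>
    simp only [Finset.sum_cons]
    exact (h a (Finset.mem_cons_self a s)).add
      (ih fun d hd => h d (Finset.mem_cons_of_mem hd))

/-- For Gaussian BAI with a unique best arm, the function
`ψ_{μ,ε}(r) = ∑_{d≠d*} 1/(r(μ_{d*} − μ_d + ε)² − 1)² − 1` is strictly
decreasing and convex on `(1/min_{d≠d*}(μ_{d*} − μ_d + ε)², ∞)`, tends to `+∞`
at the left endpoint and to `−1` at `+∞`, hence has a unique root there. -/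
theorem psi_has_unique_root (K : ℕ) (hK : 1 < K) (μ : Fin K → ℝ) (ε : ℝ)
    (hε : 0 < ε) (dstar : Fin K) (hbest : ∀ d, d ≠ dstar → μ d < μ dstar)
    (hne : (Finset.univ.erase dstar).Nonempty)
    (Δ : Fin K → ℝ) (hΔ : ∀ d, Δ d = μ dstar - μ d + ε)
    (L : ℝ) (hL : L = 1 / ((Finset.univ.erase dstar).inf' hne (fun d => (Δ d) ^ 2)))
    (ψ : ℝ → ℝ)
    (hψ : ∀ r, ψ r = (∑ d ∈ Finset.univ.erase dstar,
        ((r * (Δ d) ^ 2 - 1) ^ 2)⁻¹) - 1) :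
    StrictAntiOn ψ (Set.Ioi L) ∧
    ConvexOn ℝ (Set.Ioi L) ψ ∧
    Tendsto ψ (nhdsWithin L (Set.Ioi L)) atTop ∧
    Tendsto ψ atTop (nhds (-1)) ∧
    (∃! r, r ∈ Set.Ioi L ∧ ψ r = 0) := by
  classical
  set T := Finset.univ.erase dstar with hT
  set M := T.inf' hne (fun d => (Δ d) ^ 2) with hM
  -- basic positivity facts
  have hΔpos : ∀ d ∈ T, 0 < Δ d := by
    intro d hd
    have hd' : d ≠ dstar := (Finset.mem_erase.mp hd).1
    have := hbest d hd'
    rw [hΔ d]; linarith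
  have hcpos : ∀ d ∈ T, 0 < (Δ d) ^ 2 := fun d hd => pow_pos (hΔpos d hd) 2
  have hMpos : 0 < M := by
    rw [hM, Finset.lt_inf'_iff]
    exact hcpos
  have hL0 : 0 < L := by rw [hL]; positivity
  have hLM : L * M = 1 := by
    rw [hL]; field_simp
  have hMle : ∀ d ∈ T, M ≤ (Δ d) ^ 2 := fun d hd => Finset.inf'_le _ hd
  have key : ∀ d ∈ T, ∀ r, r ∈ Set.Ioi L → 0 < r * (Δ d) ^ 2 - 1 := by
    intro d hd r hr
    have hr' : L < r := hr
    have h1 : L * M < r * M := by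
      exact mul_lt_mul_of_pos_right hr' hMpos
    have h2 : r * M ≤ r * (Δ d) ^ 2 :=
      mul_le_mul_of_nonneg_left (hMle d hd) (le_of_lt (lt_trans hL0 hr'))
    rw [hLM] at h1
    linarith
  -- Strict antitonicity
  have hanti : StrictAntiOn ψ (Set.Ioi L) := by
    intro a ha b hb hab
    rw [hψ a, hψ b]
    have hsum : (∑ d ∈ T, ((b * (Δ d) ^ 2 - 1) ^ 2)⁻¹)
        < ∑ d ∈ T, ((a * (Δ d) ^ 2 - 1) ^ 2)⁻¹ := by
      apply Finset.sum_lt_sum_of_nonempty hne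
      intro d hd
      have ha' := key d hd a ha
      have hb' := key d hd b hb
      have hcd := hcpos d hd
      have hlt : a * (Δ d) ^ 2 - 1 < b * (Δ d) ^ 2 - 1 := by nlinarith
      have hsq : (a * (Δ d) ^ 2 - 1) ^ 2 < (b * (Δ d) ^ 2 - 1) ^ 2 := by nlinarith
      exact inv_strictAnti₀ (by positivity) hsq
    linarith
  -- Convexity
  have hconv : ConvexOn ℝ (Set.Ioi L) ψ := by
    have hterm : ∀ d ∈ T, ConvexOn ℝ (Set.Ioi L)
        (fun r => ((r * (Δ d) ^ 2 - 1) ^ 2)⁻¹) := by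
      intro d hd
      have hz := convexOn_zpow (𝕜 := ℝ) (-2)
      refine ⟨convex_Ioi L, ?_⟩
      intro x hx y hy a b ha hb hab
      have hx' := key d hd x hx
      have hy' := key d hd y hy
      have hcomb : (a • x + b • y) * (Δ d) ^ 2 - 1
          = a • (x * (Δ d) ^ 2 - 1) + b • (y * (Δ d) ^ 2 - 1) := by
        simp only [smul_eq_mul]; ring_nf; nlinarith [hab]
      have h2 := hz.2 (Set.mem_Ioi.mpr hx') (Set.mem_Ioi.mpr hy') ha hb hab
      have hzpow : ∀ t : ℝ, 0 < t → t ^ (-2 : ℤ) = (t ^ 2)⁻¹ := by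
        intro t ht
        rw [zpow_neg, ← zpow_natCast]
        norm_num
      simp only [smul_eq_mul] at h2 hcomb ⊢
      rw [hcomb]
      have hpos : 0 < a * (x * (Δ d) ^ 2 - 1) + b * (y * (Δ d) ^ 2 - 1) := by
        rcases eq_or_lt_of_le ha with h | h
        · have hb1 : b = 1 := by linarith
          simp [← h, hb1, hy']
        · nlinarith
      rw [hzpow _ hpos, hzpow _ hx', hzpow _ hy'] at h2
      exact h2
    have hsum := convexOn_sum_aux T _ hterm
    have : ψ = (fun r => ∑ d ∈ T, ((r * (Δ d) ^ 2 - 1) ^ 2)⁻¹) + (fun _ => (-1 : ℝ)) := by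
      funext r; simp [hψ r, sub_eq_add_neg]
    rw [this]
    exact hsum.add (convexOn_const _ (convex_Ioi L))
  -- Tendsto atTop at left endpoint
  have htop : Tendsto ψ (nhdsWithin L (Set.Ioi L)) atTop := by
    obtain ⟨d0, hd0, hd0eq⟩ := Finset.exists_mem_eq_inf' hne (fun d => (Δ d) ^ 2)
    have hc0 : (Δ d0) ^ 2 = M := by rw [hM, hd0eq]
    -- the d0 term tends to atTop
    have h1 : Tendsto (fun r : ℝ => (r * M - 1) ^ 2)
        (nhdsWithin L (Set.Ioi L)) (nhdsWithin 0 (Set.Ioi 0)) := by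
      apply tendsto_nhdsWithin_of_tendsto_nhds_of_eventually_within
      · have : Continuous (fun r : ℝ => (r * M - 1) ^ 2) := by continuity
        have h0 : (L * M - 1) ^ 2 = 0 := by rw [hLM]; ring
        simpa [h0] using (this.tendsto L).mono_left nhdsWithin_le_nhds
      · filter_upwards [self_mem_nhdsWithin] with r hr
        have := key d0 hd0 r hr
        rw [hc0] at this
        exact Set.mem_Ioi.mpr (by positivity)
    have h2 : Tendsto (fun r : ℝ => ((r * M - 1) ^ 2)⁻¹)
        (nhdsWithin L (Set.Ioi L)) atTop := h1.inv_tendsto_nhdsGT_zero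
    have h3 : Tendsto (fun r : ℝ => ((r * M - 1) ^ 2)⁻¹ - 1)
        (nhdsWithin L (Set.Ioi L)) atTop := tendsto_atTop_add_const_right _ _ h2
    apply tendsto_atTop_mono' _ _ h3
    filter_upwards [self_mem_nhdsWithin] with r hr
    rw [hψ r]
    have hle : ((r * (Δ d0) ^ 2 - 1) ^ 2)⁻¹
        ≤ ∑ d ∈ T, ((r * (Δ d) ^ 2 - 1) ^ 2)⁻¹ := by
      apply Finset.single_le_sum (f := fun d => ((r * (Δ d) ^ 2 - 1) ^ 2)⁻¹) _ hd0
      intro d hd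
      have := key d hd r hr
      positivity
    rw [hc0] at hle
    linarith
  -- Tendsto -1 at atTop
  have hinf : Tendsto ψ atTop (nhds (-1)) := by
    have hsum : Tendsto (fun r : ℝ => ∑ d ∈ T, ((r * (Δ d) ^ 2 - 1) ^ 2)⁻¹)
        atTop (nhds 0) := by
      have : Tendsto (fun r : ℝ => ∑ d ∈ T, ((r * (Δ d) ^ 2 - 1) ^ 2)⁻¹)
          atTop (nhds (∑ d ∈ T, (0 : ℝ))) := by
        apply tendsto_finset_sum
        intro d hd
        have hatTop : Tendsto (fun r : ℝ => (r * (Δ d) ^ 2 - 1) ^ 2) atTop atTop := by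
          exact (tendsto_pow_atTop (by norm_num : (2:ℕ) ≠ 0)).comp
            (tendsto_atTop_add_const_right _ _
              (Tendsto.atTop_mul_const (hcpos d hd) tendsto_id))
        exact hatTop.inv_tendsto_atTop
      simpa using this
    have := hsum.sub_const 1
    simp only [zero_sub] at this
    convert this using 1
    funext r; exact hψ r
  refine ⟨hanti, hconv, htop, hinf, ?_⟩
  -- Existence and uniqueness of root
  have hcont : ContinuousOn ψ (Set.Ioi L) := by
    have : ContinuousOn (fun r => (∑ d ∈ T, ((r * (Δ d) ^ 2 - 1) ^ 2)⁻¹) - 1)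
        (Set.Ioi L) := by
      apply ContinuousOn.sub _ continuousOn_const
      apply continuousOn_finset_sum
      intro d hd
      apply ContinuousOn.inv₀
      · fun_prop
      · intro r hr
        have := key d hd r hr
        positivity
    exact this.congr fun r _ => hψ r
  -- get a point where ψ > 0
  have hgt : ∃ a ∈ Set.Ioi L, 0 < ψ a := by
    have h1 : ∀ᶠ r in nhdsWithin L (Set.Ioi L), 0 < ψ r :=
      htop.eventually (eventually_gt_atTop 0)
    have h2 := h1.and self_mem_nhdsWithin
    obtain ⟨a, ha1, ha2⟩ := h2.exists
    exact ⟨a, ha2, ha1⟩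
  obtain ⟨a, haL, hapos⟩ := hgt
  -- get a point b > a where ψ < 0
  have hlt : ∃ b, a < b ∧ ψ b < 0 := by
    have h1 : ∀ᶠ r in atTop, ψ r < 0 :=
      hinf.eventually (gt_mem_nhds (by norm_num : (-1 : ℝ) < 0))
    have h2 := h1.and (eventually_gt_atTop a)
    obtain ⟨b, hb1, hb2⟩ := h2.exists
    exact ⟨b, hb2, hb1⟩
  obtain ⟨b, hab, hbneg⟩ := hlt
  have hIcc : Set.Icc a b ⊆ Set.Ioi L := fun x hx => lt_of_lt_of_le haL hx.1
  have hivt := intermediate_value_Icc' (le_of_lt hab) (hcont.mono hIcc)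
  have h0mem : (0 : ℝ) ∈ Set.Icc (ψ b) (ψ a) := ⟨le_of_lt hbneg, le_of_lt hapos⟩
  obtain ⟨r, hrmem, hr0⟩ := hivt h0mem
  refine ⟨r, ⟨hIcc hrmem, hr0⟩, ?_⟩
  intro s ⟨hsL, hs0⟩
  exact hanti.injOn hsL (hIcc hrmem) (by rw [hs0, hr0])
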